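/- Define U_2 : ℝ → ℝ^4 by U_2(t) = (cos t, sin t, cos 3t, sin 3t), and let B_2 = conv{U_2(t) : t ∈ ℝ} be the convex hull of the image of U_2. If t₁, t₂ ∈ ℝ satisfy 0 < t₂ − t₁ < 2π/3 (i.e., t₁ and t₂ are distinct points of an open arc of length 2π/3), then the closed segment [U_2(t₁), U_2(t₂)] is a face of the 4-dimensional convex body B_2. -/
import Mathlib


open Set

/-- A (nonempty, proper) exposed face of a convex body `K`. -/
def IsProperFace {E : Type*} [AddCommGroup E] [Module ℝ E] [TopologicalSpace E]
    (K F : Set E) : Prop :=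
  F.Nonempty ∧ F ≠ K ∧ IsExposed ℝ K F

/-- The symmetric moment curve `U_2(t) = (cos t, sin t, cos 3t, sin 3t) ∈ ℝ⁴`. -/
noncomputable def U2 (t : ℝ) : Fin 4 → ℝ :=
  ![Real.cos t, Real.sin t, Real.cos (3 * t), Real.sin (3 * t)]

/-- An explicit continuous linear functional on `ℝ⁴` given by coefficients `w`. -/
noncomputable def linFun (w : Fin 4 → ℝ) : (Fin 4 → ℝ) →L[ℝ] ℝ :=
  LinearMap.toContinuousLinearMap
    { toFun := fun x => ∑ i, w i * x i
      map_add' := by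
        intro x y
        simp [mul_add, Finset.sum_add_distrib]
      map_smul' := by
        intro c x
        simp [Finset.mul_sum, mul_left_comm] }

lemma linFun_apply (w x : Fin 4 → ℝ) : linFun w x = ∑ i, w i * x i := rfl

lemma U2_periodic (x : ℝ) (k : ℤ) : U2 (x + k * (2 * Real.pi)) = U2 x := by
  have h3 : 3 * (x + (k : ℝ) * (2 * Real.pi)) = 3 * x + ((3 * k : ℤ) : ℝ) * (2 * Real.pi) := by
    push_cast; ring
  have hc3 : Real.cos (3 * (x + (k : ℝ) * (2 * Real.pi))) = Real.cos (3 * x) := by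
    rw [h3]; exact Real.cos_add_int_mul_two_pi _ _
  have hs3 : Real.sin (3 * (x + (k : ℝ) * (2 * Real.pi))) = Real.sin (3 * x) := by
    rw [h3]; exact Real.sin_add_int_mul_two_pi _ _
  funext i
  fin_cases i <;>
    simp [U2, hc3, hs3, Real.cos_add_int_mul_two_pi, Real.sin_add_int_mul_two_pi]

theorem stmt5 (t₁ t₂ : ℝ) (h₁ : 0 < t₂ - t₁) (h₂ : t₂ - t₁ < 2 * Real.pi / 3) :
    IsProperFace (convexHull ℝ (Set.range U2)) (segment ℝ (U2 t₁) (U2 t₂)) := by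
  have hπ := Real.pi_pos
  set K := convexHull ℝ (Set.range U2) with hK
  set c : ℝ := (t₁ + t₂) / 2 with hc
  set α : ℝ := (t₂ - t₁) / 2 with hαdef
  have hα0 : 0 < α := by rw [hαdef]; linarith
  have hα3 : α < Real.pi / 3 := by rw [hαdef]; linarith
  set u : ℝ := Real.cos α with hudef
  have hu : 1 / 2 < u := by
    have h := Real.cos_lt_cos_of_nonneg_of_le_pi hα0.le (by linarith) hα3
    rw [Real.cos_pi_div_three] at h
    exact h
  set a : ℝ := 3 * u ^ 2 - 3 / 4 with hadef
  set b : ℝ := -(1 / 4 : ℝ) with hbdef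
  set M : ℝ := a * u + b * (4 * u ^ 3 - 3 * u) with hMdef
  set w : Fin 4 → ℝ :=
    ![a * Real.cos c, a * Real.sin c, b * Real.cos (3 * c), b * Real.sin (3 * c)] with hw
  set l := linFun w with hl
  -- value of l on the curve
  have hval : ∀ t : ℝ, l (U2 t) = a * Real.cos (t - c) + b * Real.cos (3 * (t - c)) := by
    intro t
    have e1 : Real.cos (t - c) = Real.cos t * Real.cos c + Real.sin t * Real.sin c :=
      Real.cos_sub t c
    have e2 : Real.cos (3 * (t - c)) =
        Real.cos (3 * t) * Real.cos (3 * c) + Real.sin (3 * t) * Real.sin (3 * c) := by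
      rw [show (3 : ℝ) * (t - c) = 3 * t - 3 * c by ring]
      exact Real.cos_sub _ _
    rw [hl, linFun_apply, Fin.sum_univ_four, e1, e2]
    simp only [hw, U2]
    simp [Matrix.cons_val_zero, Matrix.cons_val_one]
    ring
  -- key algebraic identity
  have hid : ∀ θ : ℝ,
      M - (a * Real.cos θ + b * Real.cos (3 * θ)) =
        (Real.cos θ - u) ^ 2 * (Real.cos θ + 2 * u) := by
    intro θ
    rw [Real.cos_three_mul, hMdef, hadef, hbdef]
    ring
  have hpos : ∀ θ : ℝ, (0 : ℝ) < Real.cos θ + 2 * u := by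
    intro θ
    have := Real.neg_one_le_cos θ
    linarith
  have hub : ∀ θ : ℝ, a * Real.cos θ + b * Real.cos (3 * θ) ≤ M := by
    intro θ
    have h := hid θ
    nlinarith [sq_nonneg (Real.cos θ - u), hpos θ]
  have hrange_le : ∀ p ∈ Set.range U2, l p ≤ M := by
    rintro p ⟨t, rfl⟩
    rw [hval t]
    exact hub (t - c)
  have hK_le : ∀ x ∈ K, l x ≤ M := by
    intro x hx
    have hsub : K ⊆ {y | l y ≤ M} :=
      convexHull_min hrange_le (convex_halfSpace_le ⟨l.map_add, l.map_smul⟩ M)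
    exact hsub hx
  -- values at the endpoints
  have ht₁c : t₁ - c = -α := by rw [hc, hαdef]; ring
  have ht₂c : t₂ - c = α := by rw [hc, hαdef]; ring
  have hcos3α : Real.cos (3 * α) = 4 * u ^ 3 - 3 * u := by
    rw [Real.cos_three_mul, hudef]
  have hMt₁ : l (U2 t₁) = M := by
    rw [hval, ht₁c, show (3 : ℝ) * (-α) = -(3 * α) by ring, Real.cos_neg, Real.cos_neg,
      hcos3α, hMdef, hudef]
  have hMt₂ : l (U2 t₂) = M := by
    rw [hval, ht₂c, hcos3α, hMdef, hudef]
  have ht₁K : U2 t₁ ∈ K := subset_convexHull ℝ _ ⟨t₁, rfl⟩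
  have ht₂K : U2 t₂ ∈ K := subset_convexHull ℝ _ ⟨t₂, rfl⟩
  have hsegK : segment ℝ (U2 t₁) (U2 t₂) ⊆ K := by
    rw [← convexHull_pair]
    exact convexHull_mono (by rintro p (rfl | rfl); exacts [⟨t₁, rfl⟩, ⟨t₂, rfl⟩])
  have hsegM : ∀ x ∈ segment ℝ (U2 t₁) (U2 t₂), l x = M := by
    rintro x ⟨s, r, hs, hr, hsr, rfl⟩
    rw [map_add, map_smul, map_smul, smul_eq_mul, smul_eq_mul, hMt₁, hMt₂, ← add_mul, hsr,
      one_mul]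
  -- equality case on the curve
  have heqcase : ∀ t : ℝ, l (U2 t) = M → U2 t = U2 t₁ ∨ U2 t = U2 t₂ := by
    intro t ht
    rw [hval t] at ht
    have h0 : (Real.cos (t - c) - u) ^ 2 * (Real.cos (t - c) + 2 * u) = 0 := by
      rw [← hid (t - c)]; linarith
    have hcu : Real.cos (t - c) = u := by
      rcases mul_eq_zero.1 h0 with h | h
      · have := pow_eq_zero_iff (n := 2) (by norm_num) |>.1 h
        linarith
      · exact absurd h (hpos (t - c)).ne'
    rw [hudef] at hcu
    rcases Real.cos_eq_cos_iff.1 hcu with ⟨k, hk | hk⟩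
    · -- α = 2kπ + (t - c), so t = t₂ + (-k)·2π
      right
      have : t = t₂ + (-k : ℤ) * (2 * Real.pi) := by
        push_cast
        linarith [ht₂c]
      rw [this, U2_periodic]
    · -- α = 2kπ - (t - c), so t = t₁ + k·2π
      left
      have : t = t₁ + (k : ℤ) * (2 * Real.pi) := by
        push_cast
        have h1 : t₁ = c - α := by rw [hc, hαdef]; ring
        linarith
      rw [this, U2_periodic]
  -- the exposed-face characterization
  have hface : segment ℝ (U2 t₁) (U2 t₂) = {x ∈ K | ∀ y ∈ K, l y ≤ l x} := by
    apply Subset.antisymm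
    · intro x hx
      refine ⟨hsegK hx, fun y hy => ?_⟩
      rw [hsegM x hx]
      exact hK_le y hy
    · rintro x ⟨hxK, hxmax⟩
      have hxM : l x = M :=
        le_antisymm (hK_le x hxK) (hMt₁ ▸ hxmax (U2 t₁) ht₁K)
      rw [hK, convexHull_eq] at hxK
      obtain ⟨ι, t, wt, z, hw0, hw1, hz, hcm⟩ := hxK
      rw [Finset.centerMass_eq_of_sum_1 _ _ hw1] at hcm
      have hterm_le : ∀ i ∈ t, wt i * l (z i) ≤ wt i * M := fun i hi =>
        mul_le_mul_of_nonneg_left (hrange_le _ (hz i hi)) (hw0 i hi)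
      have hsum_eq : ∑ i ∈ t, wt i * l (z i) = ∑ i ∈ t, wt i * M := by
        have h1 : ∑ i ∈ t, wt i * l (z i) = l x := by
          rw [← hcm, map_sum]
          exact Finset.sum_congr rfl fun i _ => by rw [map_smul, smul_eq_mul]
        have h2 : ∑ i ∈ t, wt i * M = M := by
          rw [← Finset.sum_mul, hw1, one_mul]
        rw [h1, h2, hxM]
      have hterm_eq := (Finset.sum_eq_sum_iff_of_le hterm_le).1 hsum_eq
      set z' : ι → (Fin 4 → ℝ) := fun i => if wt i = 0 then U2 t₁ else z i with hz'
      have hxz' : x = ∑ i ∈ t, wt i • z' i := by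
        rw [← hcm]
        refine Finset.sum_congr rfl fun i _ => ?_
        by_cases h : wt i = 0
        · simp [h]
        · simp [hz', h]
      have hz'mem : ∀ i ∈ t, z' i ∈ segment ℝ (U2 t₁) (U2 t₂) := by
        intro i hi
        by_cases h : wt i = 0
        · simp only [hz', h, if_true]
          exact left_mem_segment ℝ _ _
        · simp only [hz', h, if_false]
          have hlz : l (z i) = M := by
            have := hterm_eq i hi
            exact mul_left_cancel₀ h this
          obtain ⟨s, hs⟩ := hz i hi
          rw [← hs] at hlz ⊢
          rcases heqcase s hlz with h' | h'
          · rw [h']; exact left_mem_segment ℝ _ _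
          · rw [h']; exact right_mem_segment ℝ _ _
      rw [hxz']
      exact (convex_segment _ _).sum_mem hw0 hw1 hz'mem
  refine ⟨⟨U2 t₁, left_mem_segment ℝ _ _⟩, ?_, fun _ => ⟨l, hface⟩⟩
  -- properness: U2 (c + π) is in K but not in the segment
  intro hsegEq
  have hmem : U2 (c + Real.pi) ∈ K := subset_convexHull ℝ _ ⟨c + Real.pi, rfl⟩
  have hlt : l (U2 (c + Real.pi)) < M := by
    rw [hval]
    have h := hid (c + Real.pi - c)
    have hcos : Real.cos (c + Real.pi - c) = -1 := by
      rw [show c + Real.pi - c = Real.pi by ring, Real.cos_pi]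
    have h1 : (0 : ℝ) < (-1 - u) ^ 2 := by nlinarith [hu]
    have h2 : (0 : ℝ) < -1 + 2 * u := by linarith
    have hprod := mul_pos h1 h2
    rw [hcos] at h
    rw [hcos]
    linarith [h, hprod]
  have := hsegM _ (hsegEq ▸ hmem)
  linarith
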